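/- Let H be a Q-graded Hopf quasigroup that is commutative (i.e. Q is a commutative quasigroup and hg = gh for all h ∈ H_p, g ∈ H_q). Then S_{p^{-1}}(S_p(h)) = h for all p ∈ Q, h ∈ H_p. -/

import Mathlib

/-!
Over the total space `⊕ₚ H_p` the graded structure becomes an ordinary Hopf quasigroup in the
sense of Klim–Majid, and commutativity of `H` becomes commutativity of the total product.

In a Hopf quasigroup the antipode is antimultiplicative. By coassociativity,
`(S(x₁)(x₂y₁))S(x₃y₂)` can be evaluated either with `S(x₁)(x₂w) = ε(x)w` on the first two
factors of `x`, or with `(zw₁)S(w₂) = ε(w)z` for `w = x₂y`; this gives `y₁S(xy₂) = ε(y)S(x)`.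
Evaluating `S(y₁)(y₂S(xy₃))` in the same two ways then gives `S(xy) = S(y)S(x)`.

If the product is commutative, applying `S` to `x₁S(x₂) = ε(x)1` yields `S(x₁)S²(x₂) = ε(x)1`,
and regrouping `x₁(S(x₂)S²(x₃))` shows `S²(x) = x`.
-/

open TensorProduct

universe u v w

/-- A quasigroup: a set with product, identity `e`, and two-sided inverses satisfying
`p⁻¹(pq) = q` and `(qp)p⁻¹ = q`. -/
structure QuasigroupStruct (Q : Type u) where
  mul : Q → Q → Q
  one : Q
  inv : Q → Q
  mul_one : ∀ p, mul p one = p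
  one_mul : ∀ p, mul one p = p
  inv_mul_cancel : ∀ p q, mul (inv p) (mul p q) = q
  mul_inv_cancel : ∀ p q, mul (mul q p) (inv p) = q

namespace QuasigroupStruct

variable {Q : Type u} (G : QuasigroupStruct Q)

lemma inv_mul_self (p : Q) : G.mul (G.inv p) p = G.one := by
  have h := G.inv_mul_cancel p G.one
  rwa [G.mul_one] at h

lemma mul_inv_self (p : Q) : G.mul p (G.inv p) = G.one := by
  have h := G.mul_inv_cancel p G.one
  rwa [G.one_mul] at h

lemma inv_inv (p : Q) : G.inv (G.inv p) = p := by
  have h := G.inv_mul_cancel (G.inv p) p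
  rw [G.inv_mul_self p] at h
  rwa [G.mul_one] at h

lemma mul_inv_cancel_left (p q : Q) : G.mul p (G.mul (G.inv p) q) = q := by
  have h := G.inv_mul_cancel (G.inv p) q
  rwa [G.inv_inv] at h

lemma inv_mul_cancel_right (p q : Q) : G.mul (G.mul q (G.inv p)) p = q := by
  have h := G.mul_inv_cancel (G.inv p) q
  rwa [G.inv_inv] at h

lemma mul_inv_rev (p q : Q) : G.inv (G.mul p q) = G.mul (G.inv q) (G.inv p) := by
  have h1 : G.mul q (G.inv (G.mul p q)) = G.inv p := by
    have h := G.mul_inv_cancel (G.mul p q) (G.inv p)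
    rwa [G.inv_mul_cancel p q] at h
  calc G.inv (G.mul p q)
      = G.mul (G.inv q) (G.mul q (G.inv (G.mul p q))) := (G.inv_mul_cancel q _).symm
    _ = G.mul (G.inv q) (G.inv p) := by rw [h1]

lemma inv_one : G.inv G.one = G.one := by
  have h := G.inv_mul_cancel G.one G.one
  rwa [G.one_mul, G.mul_one] at h

end QuasigroupStruct

/-- Transport along an equality of grades, as a linear map. -/
def gcl {Q : Type u} {H : Q → Type w} {k : Type v} [CommSemiring k]
    [∀ p, AddCommMonoid (H p)] [∀ p, Module k (H p)] {p q : Q} (e : p = q) :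
    H p →ₗ[k] H q := by subst e; exact LinearMap.id

/-- A `Q`-graded Hopf quasigroup: a family of coassociative counital coalgebras `H p`
with a (not necessarily associative) graded multiplication, unit and antipode family,
such that the multiplications and the unit are coalgebra maps and the antipode
satisfies the Hopf quasigroup axioms. -/
structure GradedHopfQuasigroup (k : Type v) [CommRing k] {Q : Type u} (G : QuasigroupStruct Q)
    (H : Q → Type w) [∀ p, AddCommGroup (H p)] [∀ p, Module k (H p)]
    [∀ p, Coalgebra k (H p)] where
  mul : ∀ p q, H p →ₗ[k] H q →ₗ[k] H (G.mul p q)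
  one : H G.one
  antipode : ∀ p, H p →ₗ[k] H (G.inv p)
  mul_one' : ∀ (p : Q) (h : H p), gcl (k := k) (G.mul_one p) ((mul p G.one h) one) = h
  one_mul' : ∀ (p : Q) (h : H p), gcl (k := k) (G.one_mul p) ((mul G.one p one) h) = h
  comul_mul : ∀ (p q : Q) (h : H p) (g : H q),
    Coalgebra.comul (R := k) ((mul p q h) g) =
      (TensorProduct.map (TensorProduct.lift (mul p q)) (TensorProduct.lift (mul p q)))
        ((TensorProduct.tensorTensorTensorComm k (H p) (H p) (H q) (H q))
          (Coalgebra.comul h ⊗ₜ[k] Coalgebra.comul g))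
  counit_mul : ∀ (p q : Q) (h : H p) (g : H q),
    Coalgebra.counit (R := k) ((mul p q h) g) =
      Coalgebra.counit (R := k) h * Coalgebra.counit (R := k) g
  comul_one : Coalgebra.comul (R := k) one = one ⊗ₜ[k] one
  counit_one : Coalgebra.counit (R := k) one = 1
  /-- `S (h₁) (h₂ g) = ε(h) g` -/
  antipode_mul_left : ∀ (p q : Q) (h : H p) (g : H q),
    TensorProduct.lift
      (((mul (G.inv p) (G.mul p q)).comp (antipode p)).compl₂ ((mul p q).flip g))
      (Coalgebra.comul h)
      = gcl (k := k) (G.inv_mul_cancel p q).symm (Coalgebra.counit (R := k) h • g)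
  /-- `h₁ (S (h₂) g) = ε(h) g` -/
  antipode_mul_left' : ∀ (p q : Q) (h : H p) (g : H q),
    TensorProduct.lift
      ((mul p (G.mul (G.inv p) q)).compl₂ (((mul (G.inv p) q).flip g).comp (antipode p)))
      (Coalgebra.comul h)
      = gcl (k := k) (G.mul_inv_cancel_left p q).symm (Coalgebra.counit (R := k) h • g)
  /-- `(g S (h₁)) h₂ = ε(h) g` -/
  antipode_mul_right : ∀ (p q : Q) (h : H p) (g : H q),
    TensorProduct.lift
      ((mul (G.mul q (G.inv p)) p).comp ((mul q (G.inv p) g).comp (antipode p)))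
      (Coalgebra.comul h)
      = gcl (k := k) (G.inv_mul_cancel_right p q).symm (Coalgebra.counit (R := k) h • g)
  /-- `(g h₁) S (h₂) = ε(h) g` -/
  antipode_mul_right' : ∀ (p q : Q) (h : H p) (g : H q),
    TensorProduct.lift
      (((mul (G.mul q p) (G.inv p)).comp (mul q p g)).compl₂ (antipode p))
      (Coalgebra.comul h)
      = gcl (k := k) (G.mul_inv_cancel p q).symm (Coalgebra.counit (R := k) h • g)

variable {k : Type v} [Field k] {Q : Type u} {G : QuasigroupStruct Q}
  {H : Q → Type w} [∀ p, AddCommGroup (H p)] [∀ p, Module k (H p)]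
  [∀ p, Coalgebra k (H p)]

theorem DFinsupp.induction_linear {ι : Type*} {β : ι → Type*} [DecidableEq ι]
    [∀ i, AddZeroClass (β i)] {motive : (Π₀ i, β i) → Prop} (f : Π₀ i, β i) (zero : motive 0)
    (add : ∀ f g, motive f → motive g → motive (f + g))
    (single : ∀ i b, motive (DFinsupp.single i b)) : motive f :=
  DFinsupp.induction f zero fun i b _ _ _ hf => add _ _ (single i b) hf

namespace Coalgebra

variable {R C V : Type*} [CommSemiring R] [AddCommMonoid C] [Module R C]
  [AddCommMonoid V] [Module R V] {c : C} {ι κ Λ : Type*}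

theorem Repr.lift_comul [CoalgebraStruct R C] (B : C →ₗ[R] C →ₗ[R] V) (r : Repr R c ι) :
    TensorProduct.lift B (comul c) = ∑ i ∈ r.index, B (r.left i) (r.right i) := by
  simp [← r.eq, map_sum]

variable [Coalgebra R C]

theorem sum_smul_counit (r : Repr R c ι) :
    ∑ i ∈ r.index, counit (R := R) (r.right i) • r.left i = c := by
  simpa only [map_sum, TensorProduct.lift.tmul, LinearMap.flip_apply, LinearMap.lsmul_apply,
    one_smul] using
    congr(TensorProduct.lift (LinearMap.lsmul R C).flip $(sum_tmul_counit_eq (R := R) r))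

theorem sum_sum_trilinear_eq (φ : C →ₗ[R] C →ₗ[R] C →ₗ[R] V) (r : Repr R c ι)
    (r₁ : ∀ i, Repr R (r.left i) κ) (r₂ : ∀ i, Repr R (r.right i) Λ) :
    ∑ i ∈ r.index, ∑ j ∈ (r₁ i).index, φ ((r₁ i).left j) ((r₁ i).right j) (r.right i) =
      ∑ i ∈ r.index, ∑ j ∈ (r₂ i).index, φ (r.left i) ((r₂ i).left j) ((r₂ i).right j) := by
  simpa only [map_sum, TensorProduct.lift.tmul, LinearMap.comp_apply,
    TensorProduct.uncurry_apply] using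
    congr(TensorProduct.lift (TensorProduct.uncurry (.id R) C C V ∘ₗ φ) $(sum_tmul_tmul_eq r r₁ r₂))

end Coalgebra

open Coalgebra

/-- Hopf quasigroup axioms (Klim–Majid) for a product `μ`, antipode `S` and unit `e` on a
coalgebra. In Sweedler notation the four antipode axioms read
`S(x₁)(x₂y) = x₁(S(x₂)y) = (yS(x₁))x₂ = (yx₁)S(x₂) = ε(x)y`. -/
structure IsHopfQuasigroup {R M : Type*} [CommSemiring R] [AddCommMonoid M] [Module R M]
    [CoalgebraStruct R M] (μ : M →ₗ[R] M →ₗ[R] M) (S : M →ₗ[R] M) (e : M) : Prop where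
  mul_one : ∀ x, μ x e = x
  one_mul : ∀ x, μ e x = x
  comul_mul : ∀ x y, comul (R := R) (μ x y) =
    TensorProduct.map (TensorProduct.lift μ) (TensorProduct.lift μ)
      (TensorProduct.tensorTensorTensorComm R M M M M (comul x ⊗ₜ comul y))
  counit_mul : ∀ x y, counit (R := R) (μ x y) = counit (R := R) x * counit (R := R) y
  comul_one : comul (R := R) e = e ⊗ₜ e
  counit_one : counit (R := R) e = 1
  antipode_mul_left : ∀ x y,
    TensorProduct.lift ((μ ∘ₗ S).compl₂ (μ.flip y)) (comul x) = counit (R := R) x • y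
  antipode_mul_left' : ∀ x y,
    TensorProduct.lift (μ.compl₂ (μ.flip y ∘ₗ S)) (comul x) = counit (R := R) x • y
  antipode_mul_right : ∀ x y,
    TensorProduct.lift (μ ∘ₗ μ y ∘ₗ S) (comul x) = counit (R := R) x • y
  antipode_mul_right' : ∀ x y,
    TensorProduct.lift ((μ ∘ₗ μ y).compl₂ S) (comul x) = counit (R := R) x • y

namespace IsHopfQuasigroup

variable {R M : Type*} [CommSemiring R] [AddCommMonoid M] [Module R M] [Coalgebra R M]
  {μ : M →ₗ[R] M →ₗ[R] M} {S : M →ₗ[R] M} {e : M} {x y : M} {ι κ : Type*}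

local infixl:70 " ⬝ " => μ

variable (hM : IsHopfQuasigroup μ S e)
include hM

theorem sum_antipode_mul_mul (r : Repr R x ι) (y : M) :
    ∑ i ∈ r.index, S (r.left i) ⬝ (r.right i ⬝ y) = counit (R := R) x • y := by
  simpa [r.lift_comul] using hM.antipode_mul_left x y

theorem sum_mul_antipode_mul (r : Repr R x ι) (y : M) :
    ∑ i ∈ r.index, r.left i ⬝ (S (r.right i) ⬝ y) = counit (R := R) x • y := by
  simpa [r.lift_comul] using hM.antipode_mul_left' x y

theorem sum_mul_mul_antipode (r : Repr R x ι) (y : M) :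
    ∑ i ∈ r.index, y ⬝ r.left i ⬝ S (r.right i) = counit (R := R) x • y := by
  simpa [r.lift_comul] using hM.antipode_mul_right' x y

theorem sum_mul_antipode (r : Repr R x ι) :
    ∑ i ∈ r.index, r.left i ⬝ S (r.right i) = counit (R := R) x • e := by
  simpa only [hM.mul_one] using hM.sum_mul_antipode_mul r e

theorem antipode_one : S e = e := by
  let r : Repr R e Unit := ⟨{()}, fun _ => e, fun _ => e, by simp [hM.comul_one]⟩
  simpa [r, hM.one_mul, hM.counit_one] using hM.sum_mul_antipode r

noncomputable def reprMul (rx : Repr R x ι) (ry : Repr R y κ) : Repr R (x ⬝ y) (ι × κ) where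
  index := rx.index ×ˢ ry.index
  left ij := rx.left ij.1 ⬝ ry.left ij.2
  right ij := rx.right ij.1 ⬝ ry.right ij.2
  eq := by
    simp [hM.comul_mul, ← rx.eq, ← ry.eq, TensorProduct.sum_tmul, TensorProduct.tmul_sum,
      map_sum, Finset.sum_product]
    exact Finset.sum_comm

theorem sum_left_mul_antipode_mul_right (x : M) (r : Repr R y ι) :
    ∑ i ∈ r.index, r.left i ⬝ S (x ⬝ r.right i) = counit (R := R) y • S x := by
  let s := Repr.arbitrary R x
  let s₁ j := Repr.arbitrary R (s.left j)
  let s₂ j := Repr.arbitrary R (s.right j)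
  let φ : M →ₗ[R] M →ₗ[R] M →ₗ[R] M := ∑ i ∈ r.index,
    ((μ ∘ₗ S).compl₂ (μ.flip (r.left i))).compr₂
      (LinearMap.lcomp R M (S ∘ₗ μ.flip (r.right i)) ∘ₗ μ)
  have hφ a b c : φ a b c = ∑ i ∈ r.index, S a ⬝ (b ⬝ r.left i) ⬝ S (c ⬝ r.right i) := by
    simp [φ]
  have left_grouping j : ∑ k ∈ (s₁ j).index, φ ((s₁ j).left k) ((s₁ j).right k) (s.right j) =
      ∑ i ∈ r.index, counit (R := R) (s.left j) • (r.left i ⬝ S (s.right j ⬝ r.right i)) := by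
    simp only [hφ]
    rw [Finset.sum_comm]
    refine Finset.sum_congr rfl fun i _ => ?_
    rw [← LinearMap.sum_apply, ← map_sum, hM.sum_antipode_mul_mul, map_smul, LinearMap.smul_apply]
  have right_grouping j : ∑ k ∈ (s₂ j).index, φ (s.left j) ((s₂ j).left k) ((s₂ j).right k) =
      (counit (R := R) (s.right j) * counit (R := R) y) • S (s.left j) := by
    rw [← hM.counit_mul, ← hM.sum_mul_mul_antipode (hM.reprMul (s₂ j) r)]
    simp only [hφ, reprMul, Finset.sum_product]
  calc ∑ i ∈ r.index, r.left i ⬝ S (x ⬝ r.right i)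
      = ∑ j ∈ s.index, ∑ k ∈ (s₁ j).index, φ ((s₁ j).left k) ((s₁ j).right k) (s.right j) := by
        simp only [left_grouping]
        conv_lhs => rw [← sum_counit_smul s]
        simp [map_sum, Finset.sum_comm (s := r.index)]
    _ = ∑ j ∈ s.index, ∑ k ∈ (s₂ j).index, φ (s.left j) ((s₂ j).left k) ((s₂ j).right k) :=
        sum_sum_trilinear_eq φ s s₁ s₂
    _ = counit (R := R) y • S x := by
        simp only [right_grouping]
        conv_rhs => rw [← sum_smul_counit s]
        simp [map_sum, Finset.smul_sum, smul_smul, mul_comm]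

theorem antipode_mul (x y : M) : S (x ⬝ y) = S y ⬝ S x := by
  let r := Repr.arbitrary R y
  let r₁ i := Repr.arbitrary R (r.left i)
  let r₂ i := Repr.arbitrary R (r.right i)
  let φ : M →ₗ[R] M →ₗ[R] M →ₗ[R] M :=
    (LinearMap.llcomp R M M M ∘ₗ μ ∘ₗ S).compl₂ (LinearMap.lcomp R M (S ∘ₗ μ x) ∘ₗ μ)
  have hφ a b c : φ a b c = S a ⬝ (b ⬝ S (x ⬝ c)) := rfl
  calc S (x ⬝ y)
      = ∑ i ∈ r.index, ∑ j ∈ (r₁ i).index, φ ((r₁ i).left j) ((r₁ i).right j) (r.right i) := by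
        simp only [hφ, hM.sum_antipode_mul_mul]
        conv_lhs => rw [← sum_counit_smul r]
        simp
    _ = ∑ i ∈ r.index, ∑ j ∈ (r₂ i).index, φ (r.left i) ((r₂ i).left j) ((r₂ i).right j) :=
        sum_sum_trilinear_eq φ r r₁ r₂
    _ = S y ⬝ S x := by
        simp only [hφ, ← map_sum, hM.sum_left_mul_antipode_mul_right]
        conv_rhs => rw [← sum_smul_counit r]
        simp

theorem sum_antipode_mul_antipode_antipode (hμ : ∀ a b, a ⬝ b = b ⬝ a) (r : Repr R x ι) :
    ∑ i ∈ r.index, S (r.left i) ⬝ S (S (r.right i)) = counit (R := R) x • e := by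
  have := congr(S $(hM.sum_mul_antipode r))
  simpa [hM.antipode_mul, hM.antipode_one, hμ (S (S _))] using this

theorem antipode_antipode (hμ : ∀ a b, a ⬝ b = b ⬝ a) (x : M) : S (S x) = x := by
  let r := Repr.arbitrary R x
  let r₁ i := Repr.arbitrary R (r.left i)
  let r₂ i := Repr.arbitrary R (r.right i)
  let φ : M →ₗ[R] M →ₗ[R] M →ₗ[R] M :=
    (LinearMap.llcomp R M M M ∘ₗ μ).compl₂ (LinearMap.lcomp R M (S ∘ₗ S) ∘ₗ μ ∘ₗ S)
  have hφ a b c : φ a b c = a ⬝ (S b ⬝ S (S c)) := rfl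
  calc S (S x)
      = ∑ i ∈ r.index, ∑ j ∈ (r₁ i).index, φ ((r₁ i).left j) ((r₁ i).right j) (r.right i) := by
        simp only [hφ, hM.sum_mul_antipode_mul]
        conv_lhs => rw [← sum_counit_smul r]
        simp
    _ = ∑ i ∈ r.index, ∑ j ∈ (r₂ i).index, φ (r.left i) ((r₂ i).left j) ((r₂ i).right j) :=
        sum_sum_trilinear_eq φ r r₁ r₂
    _ = x := by
        simp only [hφ, ← map_sum, hM.sum_antipode_mul_antipode_antipode hμ, map_smul, hM.mul_one]
        exact sum_smul_counit r

end IsHopfQuasigroup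

theorem single_gcl {k : Type*} [CommSemiring k] {Q : Type*} [DecidableEq Q] {H : Q → Type*}
    [∀ p, AddCommMonoid (H p)] [∀ p, Module k (H p)] {a b : Q} (e : a = b) (x : H a) :
    DFinsupp.single b (gcl (k := k) e x) = DFinsupp.single a x := by
  subst e; rfl

namespace GradedHopfQuasigroup

variable {k : Type*} [CommRing k] {Q : Type*} [DecidableEq Q] {G : QuasigroupStruct Q}
  {H : Q → Type*} [∀ p, AddCommGroup (H p)] [∀ p, Module k (H p)] [∀ p, Coalgebra k (H p)]
  (A : GradedHopfQuasigroup k G H)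

noncomputable def totalMul : (Π₀ p, H p) →ₗ[k] (Π₀ p, H p) →ₗ[k] Π₀ p, H p :=
  DFinsupp.lsum k fun p => LinearMap.flip <| DFinsupp.lsum k fun q =>
    ((A.mul p q).compr₂ (DFinsupp.lsingle (G.mul p q))).flip

noncomputable def totalAntipode : (Π₀ p, H p) →ₗ[k] Π₀ p, H p :=
  DFinsupp.lsum k fun p => DFinsupp.lsingle (G.inv p) ∘ₗ A.antipode p

noncomputable def totalOne : Π₀ p, H p := DFinsupp.single G.one A.one

@[simp]
theorem totalMul_single_single (p q : Q) (a : H p) (b : H q) :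
    A.totalMul (DFinsupp.single p a) (DFinsupp.single q b) =
      DFinsupp.single (G.mul p q) (A.mul p q a b) := by
  simp [totalMul]

@[simp]
theorem totalAntipode_single (p : Q) (a : H p) :
    A.totalAntipode (DFinsupp.single p a) = DFinsupp.single (G.inv p) (A.antipode p a) := by
  simp [totalAntipode]

theorem sum_single_eq_counit_smul_single {p q a : Q} {h : H p} {ι : Type*} (r : Repr k h ι)
    {B : H p →ₗ[k] H p →ₗ[k] H a} {e : q = a} {g : H q}
    (hB : TensorProduct.lift B (comul h) = gcl (k := k) e (counit (R := k) h • g)) :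
    ∑ i ∈ r.index, DFinsupp.single a (B (r.left i) (r.right i)) =
      counit (R := k) h • DFinsupp.single q g := by
  rw [← DFinsupp.single_smul, ← single_gcl (k := k) e, ← hB, r.lift_comul,
    ← DFinsupp.lsingle_apply (R := k), map_sum]
  rfl

theorem totalMul_totalOne (x : Π₀ p, H p) : A.totalMul x A.totalOne = x := by
  induction x using DFinsupp.induction_linear with
  | zero | add => simp_all
  | single p h =>
    rw [totalOne, totalMul_single_single, ← single_gcl (k := k) (G.mul_one p), A.mul_one']

theorem totalOne_totalMul (x : Π₀ p, H p) : A.totalMul A.totalOne x = x := by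
  induction x using DFinsupp.induction_linear with
  | zero | add => simp_all
  | single p h =>
    rw [totalOne, totalMul_single_single, ← single_gcl (k := k) (G.one_mul p), A.one_mul']

theorem comul_totalMul (x y : Π₀ p, H p) :
    comul (R := k) (A.totalMul x y) =
      TensorProduct.map (TensorProduct.lift A.totalMul) (TensorProduct.lift A.totalMul)
        (TensorProduct.tensorTensorTensorComm k _ _ _ _ (comul x ⊗ₜ comul y)) := by
  induction x using DFinsupp.induction_linear with
  | zero | add => simp_all [TensorProduct.add_tmul]
  | single p a =>
    induction y using DFinsupp.induction_linear with
    | zero | add => simp_all [TensorProduct.tmul_add]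
    | single q b =>
      rw [totalMul_single_single, DFinsupp.comul_single, A.comul_mul, DFinsupp.comul_single,
        DFinsupp.comul_single, ← (Repr.arbitrary k a).eq, ← (Repr.arbitrary k b).eq]
      simp [map_sum, TensorProduct.sum_tmul, TensorProduct.tmul_sum]

theorem counit_totalMul (x y : Π₀ p, H p) :
    counit (R := k) (A.totalMul x y) = counit (R := k) x * counit (R := k) y := by
  induction x using DFinsupp.induction_linear with
  | zero | add => simp_all [add_mul]
  | single p a =>
    induction y using DFinsupp.induction_linear with
    | zero | add => simp_all [mul_add]
    | single q b => simp [A.counit_mul]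

theorem lift_comul_eq_counit_smul_of_single
    {F : (Π₀ p, H p) → (Π₀ p, H p) →ₗ[k] (Π₀ p, H p) →ₗ[k] Π₀ p, H p}
    (hF : ∀ p (h : H p) y, TensorProduct.lift ((F y ∘ₗ DFinsupp.lsingle p).compl₂
      (DFinsupp.lsingle p)) (comul h) = counit (R := k) h • y)
    (x y : Π₀ p, H p) : TensorProduct.lift (F y) (comul x) = counit (R := k) x • y := by
  induction x using DFinsupp.induction_linear with
  | zero | add => simp_all [add_smul]
  | single p h =>
    rw [DFinsupp.comul_single, ← LinearMap.comp_apply, TensorProduct.lift_comp_map, hF,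
      DFinsupp.counit_single]

theorem isHopfQuasigroup_total :
    IsHopfQuasigroup A.totalMul A.totalAntipode A.totalOne where
  mul_one := A.totalMul_totalOne
  one_mul := A.totalOne_totalMul
  comul_mul := A.comul_totalMul
  counit_mul := A.counit_totalMul
  comul_one := by simp [totalOne, A.comul_one]
  counit_one := by simp [totalOne, A.counit_one]
  antipode_mul_left := lift_comul_eq_counit_smul_of_single fun p h y => by
    rw [(Repr.arbitrary k h).lift_comul]
    induction y using DFinsupp.induction_linear with
    | zero | add => simp_all [Finset.sum_add_distrib]
    | single q g => simpa using sum_single_eq_counit_smul_single _ (A.antipode_mul_left p q h g)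
  antipode_mul_left' := lift_comul_eq_counit_smul_of_single fun p h y => by
    rw [(Repr.arbitrary k h).lift_comul]
    induction y using DFinsupp.induction_linear with
    | zero | add => simp_all [Finset.sum_add_distrib]
    | single q g => simpa using sum_single_eq_counit_smul_single _ (A.antipode_mul_left' p q h g)
  antipode_mul_right := lift_comul_eq_counit_smul_of_single fun p h y => by
    rw [(Repr.arbitrary k h).lift_comul]
    induction y using DFinsupp.induction_linear with
    | zero | add => simp_all [Finset.sum_add_distrib]
    | single q g => simpa using sum_single_eq_counit_smul_single _ (A.antipode_mul_right p q h g)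
  antipode_mul_right' := lift_comul_eq_counit_smul_of_single fun p h y => by
    rw [(Repr.arbitrary k h).lift_comul]
    induction y using DFinsupp.induction_linear with
    | zero | add => simp_all [Finset.sum_add_distrib]
    | single q g => simpa using sum_single_eq_counit_smul_single _ (A.antipode_mul_right' p q h g)

theorem totalMul_comm (hQ : ∀ p q, G.mul p q = G.mul q p)
    (hH : ∀ (p q : Q) (h : H p) (g : H q),
      gcl (k := k) (hQ p q) ((A.mul p q h) g) = (A.mul q p g) h)
    (x y : Π₀ p, H p) : A.totalMul x y = A.totalMul y x := by
  induction x using DFinsupp.induction_linear with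
  | zero | add => simp_all
  | single p h =>
    induction y using DFinsupp.induction_linear with
    | zero | add => simp_all
    | single q g => rw [totalMul_single_single, totalMul_single_single, ← hH, single_gcl]

end GradedHopfQuasigroup

theorem gradedHopfQuasigroup_antipode_antipode_of_commutative
    (A : GradedHopfQuasigroup k G H)
    (hQ : ∀ p q, G.mul p q = G.mul q p)
    (hH : ∀ (p q : Q) (h : H p) (g : H q),
      gcl (k := k) (hQ p q) ((A.mul p q h) g) = (A.mul q p g) h)
    (p : Q) (h : H p) :
    gcl (k := k) (G.inv_inv p) (A.antipode (G.inv p) (A.antipode p h)) = h := by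
  classical
  have hS := A.isHopfQuasigroup_total.antipode_antipode (A.totalMul_comm hQ hH) (.single p h)
  rw [A.totalAntipode_single, A.totalAntipode_single, ← single_gcl (k := k) (G.inv_inv p)] at hS
  exact DFinsupp.single_injective hS
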